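/- arXiv:1605.09251 — 2 statements merged into one kernel-verified Lean document; each statement's English description precedes it below -/
import Mathlib

section
/- Let A², …, A^{r−2} be smooth functions of t, f a smooth function of t, and φ(t) = ∫_{t₀}^t f. Then the vector field Q = ∂_x + φ(t)u∂_u is an infinitesimal symmetry of u_t = ∂_x^r u + ∑_{j=2}^{r−2} A^j(t)∂_x^j u + f(t)x u, that is, if u(t,x) solves this equation, then the function w := φ(t)u − u_x solves the same equation. -/
open Function
open scoped ContDiff

private lemma itd_smooth {g : ℝ → ℝ} (hg : ContDiff ℝ ∞ g) (n : ℕ) :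
    ContDiff ℝ ∞ (iteratedDeriv n g) := by
  rw [iteratedDeriv_eq_iterate]
  exact hg.iterate_deriv n

private lemma itd_hasDerivAt {g : ℝ → ℝ} (hg : ContDiff ℝ ∞ g) (n : ℕ) (x : ℝ) :
    HasDerivAt (iteratedDeriv n g) (iteratedDeriv (n + 1) g x) x := by
  have h := (((itd_smooth hg n).differentiable (by norm_cast)) x).hasDerivAt
  rwa [iteratedDeriv_succ]

/-- Linearity of iterated derivatives for the combination `c • g - h`. -/
private lemma itd_comb (c : ℝ) {g h : ℝ → ℝ} (hg : ContDiff ℝ ∞ g) (hh : ContDiff ℝ ∞ h)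
    (n : ℕ) :
    iteratedDeriv n (fun y => c * g y - h y)
      = fun x => c * iteratedDeriv n g x - iteratedDeriv n h x := by
  have h1le : (∞ : WithTop ℕ∞) ≠ 0 := by norm_cast
  induction n with
  | zero => simp [iteratedDeriv_zero]
  | succ n ih =>
    funext x
    rw [iteratedDeriv_succ, iteratedDeriv_succ, iteratedDeriv_succ, ih]
    have hg' : DifferentiableAt ℝ (iteratedDeriv n g) x :=
      ((itd_smooth hg n).differentiable h1le) x
    have hh' : DifferentiableAt ℝ (iteratedDeriv n h) x :=
      ((itd_smooth hh n).differentiable h1le) x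
    rw [deriv_fun_sub (hg'.const_mul c) hh', deriv_const_mul c hg']

/-- Equality of mixed partial derivatives (Clairaut), in `HasDerivAt` form. -/
private lemma mixed_partial {u : ℝ → ℝ → ℝ} (hu : ContDiff ℝ ∞ (uncurry u)) (t x : ℝ) :
    HasDerivAt (fun s => deriv (fun y => u s y) x)
      (deriv (fun y => deriv (fun s => u s y) t) x) t := by
  have h1le : (∞ : WithTop ℕ∞) ≠ 0 := by norm_cast
  set F := uncurry u with hF
  have hFd : Differentiable ℝ F := hu.differentiable h1le
  set G := fderiv ℝ F with hG
  have hGc : ContDiff ℝ ∞ G := hu.fderiv_right (by exact_mod_cast le_top)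
  have hGd : Differentiable ℝ G := hGc.differentiable h1le
  have h1 : ∀ s y : ℝ, deriv (fun z => u s z) y = G (s, y) (0, 1) := by
    intro s y
    have hprod : HasDerivAt (fun z : ℝ => ((s, z) : ℝ × ℝ)) ((0 : ℝ), (1 : ℝ)) y :=
      (hasDerivAt_const y s).prodMk (hasDerivAt_id y)
    exact ((hFd (s, y)).hasFDerivAt.comp_hasDerivAt y hprod).deriv
  have h2 : ∀ s y : ℝ, deriv (fun z => u z y) s = G (s, y) (1, 0) := by
    intro s y
    have hprod : HasDerivAt (fun z : ℝ => ((z, y) : ℝ × ℝ)) ((1 : ℝ), (0 : ℝ)) s :=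
      (hasDerivAt_id s).prodMk (hasDerivAt_const s y)
    exact ((hFd (s, y)).hasFDerivAt.comp_hasDerivAt s hprod).deriv
  have keyT : ∀ v : ℝ × ℝ,
      HasDerivAt (fun s : ℝ => G (s, x) v) (fderiv ℝ G (t, x) ((1:ℝ), (0:ℝ)) v) t := by
    intro v
    have hprod : HasDerivAt (fun z : ℝ => ((z, x) : ℝ × ℝ)) ((1 : ℝ), (0 : ℝ)) t :=
      (hasDerivAt_id t).prodMk (hasDerivAt_const t x)
    exact ((ContinuousLinearMap.apply ℝ ℝ v).hasFDerivAt.comp (t, x)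
      (hGd (t, x)).hasFDerivAt).comp_hasDerivAt t hprod
  have keyX : ∀ v : ℝ × ℝ,
      HasDerivAt (fun y : ℝ => G (t, y) v) (fderiv ℝ G (t, x) ((0:ℝ), (1:ℝ)) v) x := by
    intro v
    have hprod : HasDerivAt (fun z : ℝ => ((t, z) : ℝ × ℝ)) ((0 : ℝ), (1 : ℝ)) x :=
      (hasDerivAt_const x t).prodMk (hasDerivAt_id x)
    exact ((ContinuousLinearMap.apply ℝ ℝ v).hasFDerivAt.comp (t, x)
      (hGd (t, x)).hasFDerivAt).comp_hasDerivAt x hprod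
  have hsym : fderiv ℝ G (t, x) (1, 0) (0, 1) = fderiv ℝ G (t, x) (0, 1) (1, 0) :=
    (hu.contDiffAt (x := (t, x))).isSymmSndFDerivAt (by simp; norm_cast) _ _
  have hL : HasDerivAt (fun s => deriv (fun y => u s y) x)
      (fderiv ℝ G (t, x) ((1:ℝ), (0:ℝ)) ((0:ℝ), (1:ℝ))) t := by
    simpa only [← h1] using keyT ((0:ℝ), (1:ℝ))
  have hR : deriv (fun y => deriv (fun s => u s y) t) x
      = fderiv ℝ G (t, x) ((0:ℝ), (1:ℝ)) ((1:ℝ), (0:ℝ)) := by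
    have h2' : (fun y : ℝ => deriv (fun s => u s y) t) = fun y : ℝ => G (t, y) (1, 0) := by
      funext y; exact h2 t y
    rw [h2']
    exact (keyX ((1:ℝ), (0:ℝ))).deriv
  rw [hR, ← hsym]
  exact hL

/-- If `u` solves `u_t = ∂_x^r u + ∑_{j=2}^{r−2} A^j(t) ∂_x^j u + f(t) x u` and `φ' = f`,
then `w := φ(t) u − u_x` solves the same equation. -/
theorem stmt_11 (r : ℕ) (hr : 2 < r) (A : ℕ → ℝ → ℝ) (hA : ∀ j, ContDiff ℝ (⊤ : ℕ∞) (A j))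
    (f φ : ℝ → ℝ) (hf : ContDiff ℝ (⊤ : ℕ∞) f) (hφ : ContDiff ℝ (⊤ : ℕ∞) φ)
    (hφf : ∀ t, deriv φ t = f t)
    (u : ℝ → ℝ → ℝ) (hu : ContDiff ℝ (⊤ : ℕ∞) (Function.uncurry u))
    (heq : ∀ t x, deriv (fun s => u s x) t
      = iteratedDeriv r (fun y => u t y) x
        + ∑ j ∈ Finset.Icc 2 (r - 2), A j t * iteratedDeriv j (fun y => u t y) x
        + f t * x * u t x) :
    ∀ t x, deriv (fun s => φ s * u s x - deriv (fun y => u s y) x) t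
      = iteratedDeriv r (fun y => φ t * u t y - deriv (fun z => u t z) y) x
        + ∑ j ∈ Finset.Icc 2 (r - 2),
            A j t * iteratedDeriv j (fun y => φ t * u t y - deriv (fun z => u t z) y) x
        + f t * x * (φ t * u t x - deriv (fun y => u t y) x) := by
  intro t x
  have h1le : (∞ : WithTop ℕ∞) ≠ 0 := by norm_cast
  have hu' : ContDiff ℝ ∞ (uncurry u) := hu.of_le (by simp)
  have hgt : ContDiff ℝ ∞ (fun y => u t y) := hu'.comp (contDiff_const.prodMk contDiff_id)
  have hst : ContDiff ℝ ∞ (fun s => u s x) := hu'.comp (contDiff_id.prodMk contDiff_const)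
  have hdgt : ContDiff ℝ ∞ (deriv (fun y => u t y)) := (contDiff_infty_iff_deriv.mp hgt).2
  -- time derivative of φ s * u s x
  have hφd : HasDerivAt φ (f t) t := by
    have h := ((hφ.differentiable (by simp)) t).hasDerivAt
    rwa [hφf] at h
  have hD1 : HasDerivAt (fun s => φ s * u s x)
      (f t * u t x + φ t * deriv (fun s => u s x) t) t :=
    hφd.mul (((hst.differentiable h1le) t).hasDerivAt)
  have hD2 := mixed_partial hu' t x
  have hLHS : deriv (fun s => φ s * u s x - deriv (fun y => u s y) x) t
      = (f t * u t x + φ t * deriv (fun s => u s x) t)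
        - deriv (fun y => deriv (fun s => u s y) t) x :=
    (hD1.sub hD2).deriv
  -- x-derivative of the equation
  have hfun : (fun y => deriv (fun s => u s y) t)
      = fun y => iteratedDeriv r (fun z => u t z) y
          + ∑ j ∈ Finset.Icc 2 (r - 2), A j t * iteratedDeriv j (fun z => u t z) y
          + f t * y * u t y := funext fun y => heq t y
  have hsumD : HasDerivAt
      (fun y => ∑ j ∈ Finset.Icc 2 (r - 2), A j t * iteratedDeriv j (fun z => u t z) y)
      (∑ j ∈ Finset.Icc 2 (r - 2), A j t * iteratedDeriv (j + 1) (fun z => u t z) x) x :=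
    HasDerivAt.fun_sum fun j _ => (itd_hasDerivAt hgt j x).const_mul (A j t)
  have hlast : HasDerivAt (fun y => f t * y * u t y)
      (f t * u t x + f t * x * deriv (fun z => u t z) x) x := by
    have h1 : HasDerivAt (fun y : ℝ => f t * y) (f t) x := by
      simpa using (hasDerivAt_id x).const_mul (f t)
    have h2 := h1.fun_mul ((hgt.differentiable h1le x).hasDerivAt)
    convert h2 using 1
  have hRderiv : HasDerivAt (fun y => deriv (fun s => u s y) t)
      (iteratedDeriv (r + 1) (fun z => u t z) x
        + ∑ j ∈ Finset.Icc 2 (r - 2), A j t * iteratedDeriv (j + 1) (fun z => u t z) x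
        + (f t * u t x + f t * x * deriv (fun z => u t z) x)) x := by
    rw [hfun]
    exact ((itd_hasDerivAt hgt r x).add hsumD).add hlast
  have hmix : deriv (fun y => deriv (fun s => u s y) t) x
      = iteratedDeriv (r + 1) (fun z => u t z) x
        + ∑ j ∈ Finset.Icc 2 (r - 2), A j t * iteratedDeriv (j + 1) (fun z => u t z) x
        + (f t * u t x + f t * x * deriv (fun z => u t z) x) := hRderiv.deriv
  -- linearity of iterated derivatives on the right-hand side
  have hcomb : ∀ n : ℕ,
      iteratedDeriv n (fun y => φ t * u t y - deriv (fun z => u t z) y) x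
        = φ t * iteratedDeriv n (fun z => u t z) x
          - iteratedDeriv (n + 1) (fun z => u t z) x := by
    intro n
    have h := congrFun (itd_comb (φ t) hgt hdgt n) x
    rw [h, ← iteratedDeriv_succ']
  have hsum : ∑ j ∈ Finset.Icc 2 (r - 2),
        A j t * iteratedDeriv j (fun y => φ t * u t y - deriv (fun z => u t z) y) x
      = φ t * ∑ j ∈ Finset.Icc 2 (r - 2), A j t * iteratedDeriv j (fun z => u t z) x
        - ∑ j ∈ Finset.Icc 2 (r - 2), A j t * iteratedDeriv (j + 1) (fun z => u t z) x := by
    rw [Finset.mul_sum, ← Finset.sum_sub_distrib]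
    exact Finset.sum_congr rfl fun j _ => by rw [hcomb j]; ring
  rw [hLHS, heq t x, hmix, hcomb r, hsum]
  ring
end

section
/- (Case 4b symmetry.) Let c₂, …, c_{r−2} and σ be real constants. If u solves u_t = ∂_x^r u + ∑_{j=2}^{r−2} c_j ∂_x^j u − x u_x + σx u, then w := e^t(σu − u_x) also solves the same equation; i.e., P(e^t) + σI(e^t) is an infinitesimal symmetry. -/
open Function
open scoped ContDiff

private lemma le_inf' (n : ℕ) : (n : WithTop ℕ∞) ≤ ∞ := by exact_mod_cast le_top

private lemma hasDerivAt_slice_x {u : ℝ → ℝ → ℝ} (hu : ContDiff ℝ (⊤ : ℕ∞) (uncurry u)) (t x : ℝ) :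
    HasDerivAt (fun y => u t y) (fderiv ℝ (uncurry u) (t, x) (0, 1)) x :=
  ((hu.differentiable (by simp) (t, x)).hasFDerivAt).comp_hasDerivAt x
    ((hasDerivAt_const x t).prodMk (hasDerivAt_id x))

private lemma hasDerivAt_slice_t {u : ℝ → ℝ → ℝ} (hu : ContDiff ℝ (⊤ : ℕ∞) (uncurry u)) (t x : ℝ) :
    HasDerivAt (fun s => u s x) (fderiv ℝ (uncurry u) (t, x) (1, 0)) t :=
  by have := ((hu.differentiable (by simp) (t, x)).hasFDerivAt).comp_hasDerivAt t
      ((hasDerivAt_id t).prodMk (hasDerivAt_const t x)); exact this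

private lemma hasFDerivAt_pd {F : ℝ × ℝ → ℝ} (hF : ContDiff ℝ (⊤ : ℕ∞) F) (v p : ℝ × ℝ) :
    HasFDerivAt (fun q => fderiv ℝ F q v)
      ((ContinuousLinearMap.apply ℝ ℝ v).comp (fderiv ℝ (fderiv ℝ F) p)) p :=
  (ContinuousLinearMap.apply ℝ ℝ v).hasFDerivAt.comp p
    (((hF.fderiv_right (m := 1) (WithTop.coe_le_coe.mpr le_top)).differentiable one_ne_zero p).hasFDerivAt)

/-- Clairaut: mixed partial derivatives commute for smooth functions of two real variables. -/
private lemma deriv_swap {u : ℝ → ℝ → ℝ} (hu : ContDiff ℝ (⊤ : ℕ∞) (uncurry u)) (t x : ℝ) :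
    deriv (fun s => deriv (fun y => u s y) x) t
      = deriv (fun y => deriv (fun s => u s y) t) x := by
  have h1 : (fun s => deriv (fun y => u s y) x)
      = fun s => fderiv ℝ (uncurry u) (s, x) (0, 1) :=
    funext fun s => (hasDerivAt_slice_x hu s x).deriv
  have h2 : (fun y => deriv (fun s => u s y) t)
      = fun y => fderiv ℝ (uncurry u) (t, y) (1, 0) :=
    funext fun y => (hasDerivAt_slice_t hu t y).deriv
  rw [h1, h2]
  have e1 : HasDerivAt (fun s => fderiv ℝ (uncurry u) (s, x) (0, 1))
      (fderiv ℝ (fderiv ℝ (uncurry u)) (t, x) (1, 0) (0, 1)) t :=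
    by have := (hasFDerivAt_pd hu (0, 1) (t, x)).comp_hasDerivAt t
        ((hasDerivAt_id t).prodMk (hasDerivAt_const t x)); exact this
  have e2 : HasDerivAt (fun y => fderiv ℝ (uncurry u) (t, y) (1, 0))
      (fderiv ℝ (fderiv ℝ (uncurry u)) (t, x) (0, 1) (1, 0)) x :=
    (hasFDerivAt_pd hu (1, 0) (t, x)).comp_hasDerivAt x
      ((hasDerivAt_const x t).prodMk (hasDerivAt_id x))
  rw [e1.deriv, e2.deriv]
  exact (hu.contDiffAt.isSymmSndFDerivAt (by simp only [minSmoothness_of_isRCLikeNormedField]; exact WithTop.coe_le_coe.mpr le_top)) (1, 0) (0, 1)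

private lemma itd_cmul {f : ℝ → ℝ} (hf : ContDiff ℝ ∞ f) (n : ℕ) (a x : ℝ) :
    iteratedDeriv n (fun y => a * f y) x = a * iteratedDeriv n f x := by
  simp only [← iteratedDerivWithin_univ]
  exact iteratedDerivWithin_const_mul (Set.mem_univ x) uniqueDiffOn_univ a
    (hf.of_le (le_inf' n)).contDiffWithinAt

private lemma itd_sub {f g : ℝ → ℝ} (hf : ContDiff ℝ ∞ f) (hg : ContDiff ℝ ∞ g) (n : ℕ)
    (x : ℝ) : iteratedDeriv n (fun y => f y - g y) x
      = iteratedDeriv n f x - iteratedDeriv n g x := by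
  simp only [← iteratedDerivWithin_univ]
  exact iteratedDerivWithin_sub (Set.mem_univ x) uniqueDiffOn_univ
    (hf.of_le (le_inf' n)).contDiffWithinAt (hg.of_le (le_inf' n)).contDiffWithinAt

private lemma itd_w {f : ℝ → ℝ} (hf : ContDiff ℝ ∞ f) (n : ℕ) (a b x : ℝ) :
    iteratedDeriv n (fun y => a * (b * f y - deriv f y)) x
      = a * (b * iteratedDeriv n f x - iteratedDeriv (n + 1) f x) := by
  have hdf : ContDiff ℝ ∞ (deriv f) := (contDiff_infty_iff_deriv.mp hf).2
  rw [itd_cmul ((contDiff_const.mul hf).sub hdf) n a x,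
    itd_sub (contDiff_const.mul hf) hdf n x, itd_cmul hf n b x, iteratedDeriv_succ',
    ← iteratedDeriv_succ']

/-- Case 4b symmetry: if `u` solves
`u_t = ∂_x^r u + ∑_{j=2}^{r−2} c_j ∂_x^j u − x u_x + σ x u`, then
`w := e^t (σ u − u_x)` solves the same equation. -/
theorem stmt_18 (r : ℕ) (hr : 2 < r) (c : ℕ → ℝ) (σ : ℝ)
    (u : ℝ → ℝ → ℝ) (hu : ContDiff ℝ (⊤ : ℕ∞) (Function.uncurry u))
    (heq : ∀ t x, deriv (fun s => u s x) t
      = iteratedDeriv r (fun y => u t y) x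
        + ∑ j ∈ Finset.Icc 2 (r - 2), c j * iteratedDeriv j (fun y => u t y) x
        - x * deriv (fun y => u t y) x + σ * x * u t x) :
    ∀ t x, deriv (fun s => Real.exp s * (σ * u s x - deriv (fun y => u s y) x)) t
      = iteratedDeriv r (fun y => Real.exp t * (σ * u t y - deriv (fun z => u t z) y)) x
        + ∑ j ∈ Finset.Icc 2 (r - 2),
            c j * iteratedDeriv j
              (fun y => Real.exp t * (σ * u t y - deriv (fun z => u t z) y)) x
        - x * deriv (fun y => Real.exp t * (σ * u t y - deriv (fun z => u t z) y)) x
        + σ * x * (Real.exp t * (σ * u t x - deriv (fun y => u t y) x)) := by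
  intro t x
  -- the space slice is smooth
  have hU : ContDiff ℝ ∞ (fun y => u t y) :=
    (hu.comp (contDiff_const.prodMk contDiff_id)).of_le (by simp)
  have hitd : ∀ k : ℕ, ContDiff ℝ ∞ (iteratedDeriv k (fun y => u t y)) := fun k => by
    rw [iteratedDeriv_eq_iterate]; exact hU.iterate_deriv k
  have hD : ∀ k : ℕ, HasDerivAt (iteratedDeriv k (fun y => u t y))
      (iteratedDeriv (k + 1) (fun y => u t y) x) x := fun k => by
    rw [iteratedDeriv_succ]
    exact (((hitd k).differentiable (by simp)) x).hasDerivAt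
  -- time derivative of the new solution
  have h1 : HasDerivAt (fun s => u s x) (deriv (fun s => u s x) t) t :=
    (hasDerivAt_slice_t hu t x).differentiableAt.hasDerivAt
  have h2 : HasDerivAt (fun s => deriv (fun y => u s y) x)
      (deriv (fun s => deriv (fun y => u s y) x) t) t := by
    have hfd : (fun s => deriv (fun y => u s y) x)
        = fun s => fderiv ℝ (uncurry u) (s, x) (0, 1) :=
      funext fun s => (hasDerivAt_slice_x hu s x).deriv
    rw [hfd]
    exact ((hasFDerivAt_pd hu (0, 1) (t, x)).comp_hasDerivAt t
      ((hasDerivAt_id t).prodMk (hasDerivAt_const t x))).differentiableAt.hasDerivAt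
  have hLT : deriv (fun s => Real.exp s * (σ * u s x - deriv (fun y => u s y) x)) t
      = Real.exp t * (σ * u t x - deriv (fun y => u t y) x)
        + Real.exp t * (σ * deriv (fun s => u s x) t
            - deriv (fun s => deriv (fun y => u s y) x) t) :=
    ((Real.hasDerivAt_exp t).mul ((h1.const_mul σ).sub h2)).deriv
  -- spatial derivative of the right-hand side of the equation
  have hAd : deriv (fun y => iteratedDeriv r (fun y => u t y) y
        + ∑ j ∈ Finset.Icc 2 (r - 2), c j * iteratedDeriv j (fun y => u t y) y
        - y * deriv (fun y => u t y) y + σ * y * u t y) x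
      = ((iteratedDeriv (r + 1) (fun y => u t y) x
          + ∑ j ∈ Finset.Icc 2 (r - 2), c j * iteratedDeriv (j + 1) (fun y => u t y) x)
         - (1 * deriv (fun y => u t y) x + x * iteratedDeriv 2 (fun y => u t y) x))
        + (σ * 1 * u t x + σ * x * deriv (fun y => u t y) x) := by
    have hd1 : HasDerivAt (fun y => deriv (fun z => u t z) y)
        (iteratedDeriv 2 (fun y => u t y) x) x := by
      have := hD 1
      rwa [iteratedDeriv_one] at this
    have hA : HasDerivAt (fun y => iteratedDeriv r (fun y => u t y) y
          + ∑ j ∈ Finset.Icc 2 (r - 2), c j * iteratedDeriv j (fun y => u t y) y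
          - y * deriv (fun y => u t y) y + σ * y * u t y)
        (((iteratedDeriv (r + 1) (fun y => u t y) x
            + ∑ j ∈ Finset.Icc 2 (r - 2), c j * iteratedDeriv (j + 1) (fun y => u t y) x)
           - (1 * deriv (fun y => u t y) x + x * iteratedDeriv 2 (fun y => u t y) x))
          + (σ * 1 * u t x + σ * x * deriv (fun y => u t y) x)) x :=
      (((hD r).fun_add (HasDerivAt.fun_sum fun j _ => (hD j).const_mul (c j))).fun_sub
        ((hasDerivAt_id x).fun_mul hd1)).fun_add
        (((hasDerivAt_id x).const_mul σ).fun_mul (hasDerivAt_slice_x hu t x).differentiableAt.hasDerivAt)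
    exact hA.deriv
  -- the x-derivative of the time derivative, via Clairaut and the equation
  have hswap : deriv (fun s => deriv (fun y => u s y) x) t
      = deriv (fun y => iteratedDeriv r (fun y => u t y) y
          + ∑ j ∈ Finset.Icc 2 (r - 2), c j * iteratedDeriv j (fun y => u t y) y
          - y * deriv (fun y => u t y) y + σ * y * u t y) x := by
    rw [deriv_swap hu t x]
    congr 1
    exact funext fun y => heq t y
  -- iterated derivatives of the new solution
  have hR1 : iteratedDeriv r (fun y => Real.exp t * (σ * u t y - deriv (fun z => u t z) y)) x
      = Real.exp t * (σ * iteratedDeriv r (fun y => u t y) x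
          - iteratedDeriv (r + 1) (fun y => u t y) x) := itd_w hU r _ _ x
  have hRd : deriv (fun y => Real.exp t * (σ * u t y - deriv (fun z => u t z) y)) x
      = Real.exp t * (σ * deriv (fun y => u t y) x
          - iteratedDeriv 2 (fun y => u t y) x) := by
    have := itd_w hU 1 (Real.exp t) σ x
    rwa [iteratedDeriv_one, iteratedDeriv_one, show (1 + 1 : ℕ) = 2 from rfl] at this
  have hRsum : ∑ j ∈ Finset.Icc 2 (r - 2),
        c j * iteratedDeriv j (fun y => Real.exp t * (σ * u t y - deriv (fun z => u t z) y)) x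
      = Real.exp t * (σ * ∑ j ∈ Finset.Icc 2 (r - 2), c j * iteratedDeriv j (fun y => u t y) x)
        - Real.exp t * ∑ j ∈ Finset.Icc 2 (r - 2),
            c j * iteratedDeriv (j + 1) (fun y => u t y) x := by
    rw [Finset.mul_sum, Finset.mul_sum, Finset.mul_sum, ← Finset.sum_sub_distrib]
    refine Finset.sum_congr rfl fun j _ => ?_
    rw [itd_w hU j _ _ x]
    ring
  rw [hLT, heq t x, hswap, hAd, hR1, hRd, hRsum]
  ring
end
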